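/- arXiv:math/0202184 — 3 statements merged into one kernel-verified Lean document; each statement's English description precedes it below -/
import Mathlib

section
/- For every n ≥ 1, the zigzag module Z_n is an indecomposable R-module. (Indecomposability of the type I modules of Gelfand–Ponomarev, as used in Lemma 1.3.) -/
/-- A subspace invariant under the two operators `a`, `b` (i.e. a submodule for
the module structure they define). -/
def RInvariant {V : Type} [AddCommGroup V] [Module ℂ V] (a b : Module.End ℂ V)
    (p : Submodule ℂ V) : Prop :=
  ∀ v ∈ p, a v ∈ p ∧ b v ∈ p

/-- A module (given by a vector space with two operators `a`, `b`) is
indecomposable if it is nonzero and is not the internal direct sum of two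
nonzero invariant subspaces. -/
def RIndecomposable {V : Type} [AddCommGroup V] [Module ℂ V]
    (a b : Module.End ℂ V) : Prop :=
  (∃ v : V, v ≠ 0) ∧ ∀ p q : Submodule ℂ V, RInvariant a b p → RInvariant a b q →
    IsCompl p q → p = ⊥ ∨ q = ⊥

/-- An isomorphism of modules given by pairs of endomorphisms: a linear
equivalence intertwining the respective actions. -/
def RModIso {V W : Type} [AddCommGroup V] [Module ℂ V] [AddCommGroup W] [Module ℂ W]
    (a b : Module.End ℂ V) (a' b' : Module.End ℂ W) : Prop :=
  ∃ e : V ≃ₗ[ℂ] W, (∀ v, e (a v) = a' (e v)) ∧ (∀ v, e (b v) = b' (e v))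

/-- The action of `a` on the zigzag module `Z_n`: on the basis `e₁, …, eₙ`
(here indexed by `Fin n`, with `i : Fin n` standing for `e_{i+1}`),
`a·e_i = e_{i+1}` for odd `i < n` (1-indexed), all other basis vectors mapped
to zero. -/
noncomputable def zigzagA (n : ℕ) : Module.End ℂ (Fin n → ℂ) :=
  Matrix.toLin' (Matrix.of fun j i : Fin n =>
    if (j : ℕ) = (i : ℕ) + 1 ∧ (i : ℕ) % 2 = 0 then 1 else 0)

/-- The action of `b` on the zigzag module `Z_n`: `b·e_i = e_{i−1}` for odd
`i > 1` (1-indexed), all other basis vectors mapped to zero. -/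
noncomputable def zigzagB (n : ℕ) : Module.End ℂ (Fin n → ℂ) :=
  Matrix.toLin' (Matrix.of fun j i : Fin n =>
    if (i : ℕ) = (j : ℕ) + 1 ∧ (i : ℕ) % 2 = 0 then 1 else 0)

/-- The action of `a` on the co-zigzag module `Z′_n`: `a·e_i = e_{i+1}` for
even `i < n` (1-indexed), all other basis vectors mapped to zero. -/
noncomputable def cozigzagA (n : ℕ) : Module.End ℂ (Fin n → ℂ) :=
  Matrix.toLin' (Matrix.of fun j i : Fin n =>
    if (j : ℕ) = (i : ℕ) + 1 ∧ (i : ℕ) % 2 = 1 then 1 else 0)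

/-- The action of `b` on the co-zigzag module `Z′_n`: `b·e_i = e_{i−1}` for
even `i > 1` (1-indexed), all other basis vectors mapped to zero. -/
noncomputable def cozigzagB (n : ℕ) : Module.End ℂ (Fin n → ℂ) :=
  Matrix.toLin' (Matrix.of fun j i : Fin n =>
    if (i : ℕ) = (j : ℕ) + 1 ∧ (i : ℕ) % 2 = 1 then 1 else 0)

/-- The `m × m` Jordan block `J_m(μ)` with eigenvalue `μ`. -/
def jordan (m : ℕ) (μ : ℂ) : Matrix (Fin m) (Fin m) ℂ :=
  Matrix.of fun i j : Fin m =>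
    if i = j then μ else if (j : ℕ) = (i : ℕ) + 1 then 1 else 0

/-- The action of `a` on the band module `B(m,μ) = ℂ^m ⊕ ℂ^m`:
`a(u,v) = (0,u)`. -/
noncomputable def bandA (m : ℕ) : Module.End ℂ ((Fin m → ℂ) × (Fin m → ℂ)) :=
  LinearMap.prod (0 : ((Fin m → ℂ) × (Fin m → ℂ)) →ₗ[ℂ] (Fin m → ℂ))
    (LinearMap.fst ℂ (Fin m → ℂ) (Fin m → ℂ))

/-- The action of `b` on the band module `B(m,μ) = ℂ^m ⊕ ℂ^m`:
`b(u,v) = (0, J_m(μ)u)`. -/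
noncomputable def bandB (m : ℕ) (μ : ℂ) : Module.End ℂ ((Fin m → ℂ) × (Fin m → ℂ)) :=
  LinearMap.prod (0 : ((Fin m → ℂ) × (Fin m → ℂ)) →ₗ[ℂ] (Fin m → ℂ))
    ((Matrix.toLin' (jordan m μ)).comp (LinearMap.fst ℂ (Fin m → ℂ) (Fin m → ℂ)))

/-! `Z_n` is indecomposable as soon as its only idempotent endomorphisms are `0` and `1`. In the
basis `e_i`, `a` and `b` move each basis vector to a neighbour, so an endomorphism commuting with
them has constant diagonal `c`; moreover its row and column through `e₁` meet only at `c`, which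
makes `c` multiplicative, so `c² = c` for an idempotent. The trace of an idempotent is its rank and
here equals `n c`: for `c = 0` the idempotent vanishes, and for `c = 1` its complement does. -/

open LinearMap Module.End

lemma rInvariant_iff {V : Type} [AddCommGroup V] [Module ℂ V] {a b : Module.End ℂ V}
    {p : Submodule ℂ V} : RInvariant a b p ↔ p ∈ a.invtSubmodule ∧ p ∈ b.invtSubmodule :=
  forall₂_and

theorem rIndecomposable_of_isIdempotentElem {V : Type} [AddCommGroup V] [Module ℂ V]
    {a b : Module.End ℂ V} (hV : ∃ v : V, v ≠ 0)
    (h : ∀ e : Module.End ℂ V, IsIdempotentElem e → Commute e a → Commute e b → e = 0 ∨ e = 1) :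
    RIndecomposable a b := by
  refine ⟨hV, fun p q hp hq hpq => ?_⟩
  have he := Submodule.isIdempotentElem_projection hpq
  rw [rInvariant_iff, ← Submodule.range_projection hpq] at hp
  rw [rInvariant_iff, ← Submodule.ker_projection hpq] at hq
  rcases h _ he (he.commute_iff.2 ⟨hp.1, hq.1⟩) (he.commute_iff.2 ⟨hp.2, hq.2⟩) with h0 | h1
  · left
    rw [← Submodule.range_projection hpq, h0, range_zero]
  · right
    rw [← Submodule.ker_projection hpq, h1, one_eq_id, ker_id]

section
variable {n : ℕ}

lemma zigzagA_apply (v : Fin n → ℂ) (j : Fin n) :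
    zigzagA n v j = ∑ i : Fin n, if (j : ℕ) = i + 1 ∧ (i : ℕ) % 2 = 0 then v i else 0 := by
  simp [zigzagA, Matrix.mulVec, dotProduct]

lemma zigzagB_apply (v : Fin n → ℂ) (j : Fin n) :
    zigzagB n v j = ∑ i : Fin n, if (i : ℕ) = j + 1 ∧ (i : ℕ) % 2 = 0 then v i else 0 := by
  simp [zigzagB, Matrix.mulVec, dotProduct]

lemma zigzagA_apply_of_even (v : Fin n → ℂ) {j : Fin n} (hj : (j : ℕ) % 2 = 0) :
    zigzagA n v j = 0 := by
  rw [zigzagA_apply]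
  exact Finset.sum_eq_zero fun i _ => if_neg (by omega)

lemma zigzagA_apply_of_eq_succ (v : Fin n → ℂ) {i j : Fin n} (hi : (i : ℕ) % 2 = 0)
    (hj : (j : ℕ) = i + 1) : zigzagA n v j = v i := by
  rw [zigzagA_apply, Finset.sum_eq_single i (fun k _ hk => if_neg ?_) (by simp), if_pos ⟨hj, hi⟩]
  exact fun h => hk (Fin.ext (by omega))

lemma zigzagB_apply_of_eq_succ (v : Fin n → ℂ) {i j : Fin n} (hi : (i : ℕ) % 2 = 0)
    (hj : (i : ℕ) = j + 1) : zigzagB n v j = v i := by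
  rw [zigzagB_apply, Finset.sum_eq_single i (fun k _ hk => if_neg ?_) (by simp), if_pos ⟨hj, hi⟩]
  exact fun h => hk (Fin.ext (by omega))

lemma zigzagA_single {i j : Fin n} (hi : (i : ℕ) % 2 = 0) (hj : (j : ℕ) = i + 1) :
    zigzagA n (Pi.single i 1) = Pi.single j 1 := by
  ext k
  simp [zigzagA, Pi.single_apply, Fin.ext_iff, hi, hj]

lemma zigzagB_single {i j : Fin n} (hi : (i : ℕ) % 2 = 0) (hj : (i : ℕ) = j + 1) :
    zigzagB n (Pi.single i 1) = Pi.single j 1 := by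
  ext k
  have hj' : ((j : ℕ) + 1) % 2 = 0 := hj ▸ hi
  simp [zigzagB, Pi.single_apply, Fin.ext_iff, hj, hj', eq_comm]

lemma zigzagB_single_zero : zigzagB (n + 1) (Pi.single 0 1) = 0 := by
  ext k
  simp [zigzagB]

end

namespace Zigzag

variable {n : ℕ} {F G : Module.End ℂ (Fin (n + 1) → ℂ)}

lemma toMatrix'_apply_eq_zero_of_even_of_odd (hFa : Commute F (zigzagA (n + 1)))
    {i j : Fin (n + 1)} (hi : (i : ℕ) % 2 = 0) (hj : (j : ℕ) % 2 = 1) :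
    toMatrix' F i j = 0 := by
  have hj' : ((⟨j - 1, by omega⟩ : Fin (n + 1)) : ℕ) % 2 = 0 := by dsimp only; omega
  rw [toMatrix'_apply, ← zigzagA_single hj' (by dsimp only; omega), ← mul_apply, hFa.eq, mul_apply,
    zigzagA_apply_of_even _ hi]

lemma toMatrix'_apply_zero_eq_zero (hFb : Commute F (zigzagB (n + 1)))
    {k : Fin (n + 1)} (hk : (k : ℕ) % 2 = 0) (hk0 : k ≠ 0) :
    toMatrix' F k 0 = 0 := by
  have hBF : zigzagB (n + 1) (F (Pi.single 0 1)) = 0 := by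
    rw [← mul_apply, ← hFb.eq, mul_apply, zigzagB_single_zero, map_zero]
  have hk1 : (k : ℕ) ≠ 0 := fun h => hk0 (Fin.ext h)
  rw [toMatrix'_apply, ← zigzagB_apply_of_eq_succ (j := ⟨k - 1, by omega⟩) (F (Pi.single 0 1))
    hk (by dsimp only; omega), hBF, Pi.zero_apply]

lemma toMatrix'_apply_succ_succ (hFa : Commute F (zigzagA (n + 1)))
    (hFb : Commute F (zigzagB (n + 1))) (i : Fin n) :
    toMatrix' F i.succ i.succ = toMatrix' F i.castSucc i.castSucc := by
  have hsucc : (i.succ : ℕ) = i.castSucc + 1 := by simp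
  rcases Nat.mod_two_eq_zero_or_one i with hi | hi
  · have hi' : (i.castSucc : ℕ) % 2 = 0 := by simpa using hi
    rw [toMatrix'_apply, ← zigzagA_single hi' hsucc, ← mul_apply, hFa.eq,
      mul_apply, zigzagA_apply_of_eq_succ _ hi' hsucc, toMatrix'_apply]
  · have hi' : (i.succ : ℕ) % 2 = 0 := by rw [Fin.val_succ]; omega
    rw [toMatrix'_apply F i.castSucc, ← zigzagB_single hi' hsucc, ← mul_apply, hFb.eq,
      mul_apply, zigzagB_apply_of_eq_succ _ hi' hsucc, toMatrix'_apply]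

lemma toMatrix'_apply_self (hFa : Commute F (zigzagA (n + 1)))
    (hFb : Commute F (zigzagB (n + 1))) (i : Fin (n + 1)) :
    toMatrix' F i i = toMatrix' F 0 0 :=
  Fin.induction rfl (fun i ih => (toMatrix'_apply_succ_succ hFa hFb i).trans ih) i

lemma trace_eq_mul_toMatrix'_zero_zero (hFa : Commute F (zigzagA (n + 1)))
    (hFb : Commute F (zigzagB (n + 1))) :
    trace ℂ _ F = (n + 1) * toMatrix' F 0 0 := by
  rw [trace_eq_matrix_trace ℂ (Pi.basisFun ℂ _), toMatrix_eq_toMatrix', Matrix.trace]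
  simp only [Matrix.diag_apply, toMatrix'_apply_self hFa hFb]
  simp

lemma toMatrix'_mul_apply_zero_zero (hFa : Commute F (zigzagA (n + 1)))
    (hGb : Commute G (zigzagB (n + 1))) :
    toMatrix' (F * G) 0 0 = toMatrix' F 0 0 * toMatrix' G 0 0 := by
  rw [toMatrix'_mul, Matrix.mul_apply, Finset.sum_eq_single 0 _ (by simp)]
  intro k _ hk
  rcases Nat.mod_two_eq_zero_or_one k with h | h
  · rw [toMatrix'_apply_zero_eq_zero hGb h hk, mul_zero]
  · rw [toMatrix'_apply_eq_zero_of_even_of_odd hFa (by simp) h, zero_mul]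

lemma eq_zero_of_toMatrix'_zero_zero {E : Module.End ℂ (Fin (n + 1) → ℂ)}
    (he : IsIdempotentElem E) (hEa : Commute E (zigzagA (n + 1)))
    (hEb : Commute E (zigzagB (n + 1))) (h0 : toMatrix' E 0 0 = 0) : E = 0 :=
  he.eq_zero_of_trace_eq_zero (by rw [trace_eq_mul_toMatrix'_zero_zero hEa hEb, h0, mul_zero])

theorem eq_zero_or_eq_one_of_isIdempotentElem {E : Module.End ℂ (Fin (n + 1) → ℂ)}
    (he : IsIdempotentElem E) (hEa : Commute E (zigzagA (n + 1)))
    (hEb : Commute E (zigzagB (n + 1))) : E = 0 ∨ E = 1 := by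
  have hc : IsIdempotentElem (toMatrix' E 0 0) := by
    rw [IsIdempotentElem, ← toMatrix'_mul_apply_zero_zero hEa hEb, he.eq]
  rcases IsIdempotentElem.iff_eq_zero_or_one.1 hc with h0 | h1
  · exact Or.inl (eq_zero_of_toMatrix'_zero_zero he hEa hEb h0)
  · refine Or.inr (sub_eq_zero.1 (eq_zero_of_toMatrix'_zero_zero he.one_sub
      ((Commute.one_left _).sub_left hEa) ((Commute.one_left _).sub_left hEb) ?_)).symm
    rw [map_sub, toMatrix'_one, Matrix.sub_apply, Matrix.one_apply_eq, h1, sub_self]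

end Zigzag

/-- Indecomposability of the type I (zigzag) modules of Gelfand–Ponomarev:
for every `n ≥ 1`, the zigzag module `Z_n` is an indecomposable `R`-module,
where `R = ℂ⟨a,b⟩/(a², b², ab, ba)`. -/
theorem zigzag_indecomposable (n : ℕ) (hn : 1 ≤ n) :
    RIndecomposable (zigzagA n) (zigzagB n) := by
  obtain ⟨m, rfl⟩ := Nat.exists_eq_add_of_le' hn
  exact rIndecomposable_of_isIdempotentElem ⟨Pi.single 0 1, by simp⟩
    fun e he hea heb => Zigzag.eq_zero_or_eq_one_of_isIdempotentElem he hea heb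
end

section
/- For every m ≥ 1 and every μ ∈ ℂ, the band modules B(m,μ) and B′(m,μ) are indecomposable R-modules. (Indecomposability of the type II modules of Gelfand–Ponomarev, as used in Lemma 1.3.) -/
/-!
A decomposition `p ⊕ q` of `ℂ^m ⊕ ℂ^m` into subspaces stable under `(u, v) ↦ (0, u)` induces
one of the first factor: the first projection of `p` equals `{v | (0, v) ∈ p}`, which makes it
stable under `J` whenever `p` is stable under `(u, v) ↦ (0, J u)`, and `p` vanishes as soon as
this projection does. So both band modules are indecomposable because `ℂ^m` is under `J_m(μ)`,
i.e. under the nilpotent shift `J_m(0)`: each nonzero shift-stable summand contains a nonzero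
vector of the kernel of the shift, and this kernel is a line, which cannot meet both summands.
-/

open Matrix

namespace Submodule

variable {R M : Type*} [Semiring R] [AddCommMonoid M] [Module R M]

theorem exists_ne_zero_mem_ker_of_isNilpotent {N : Module.End R M} (hN : IsNilpotent N)
    {p : Submodule R M} (hp : ∀ v ∈ p, N v ∈ p) (hp0 : p ≠ ⊥) :
    ∃ v ∈ p, v ≠ 0 ∧ N v = 0 := by
  obtain ⟨x, hxp, hx0⟩ := p.exists_mem_ne_zero_of_ne_bot hp0
  have hpow : ∀ k, (N ^ k) x ∈ p := by
    intro k
    induction k with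
    | zero => exact hxp
    | succ k ih => rw [pow_succ', Module.End.mul_apply]; exact hp _ ih
  have hvanish : ∃ k, (N ^ (k + 1)) x = 0 := by
    obtain ⟨n, hn⟩ := hN
    exact ⟨n, by rw [pow_succ', hn, mul_zero, LinearMap.zero_apply]⟩
  classical
  refine ⟨(N ^ Nat.find hvanish) x, hpow _, ?_, ?_⟩
  · cases h : Nat.find hvanish with
    | zero => simpa using hx0
    | succ k => exact Nat.find_min hvanish (by omega : k < Nat.find hvanish)
  · rw [← Module.End.mul_apply, ← pow_succ']
    exact Nat.find_spec hvanish

theorem eq_bot_or_eq_bot_of_isCompl_of_isNilpotent {K V : Type*} [DivisionRing K]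
    [AddCommGroup V] [Module K V] {N : Module.End K V} (hN : IsNilpotent N) {e : V}
    (hker : LinearMap.ker N ≤ K ∙ e) {p q : Submodule K V} (hp : ∀ v ∈ p, N v ∈ p)
    (hq : ∀ v ∈ q, N v ∈ q) (hpq : IsCompl p q) : p = ⊥ ∨ q = ⊥ := by
  by_contra! h
  obtain ⟨v, hvp, hv0, hNv⟩ := exists_ne_zero_mem_ker_of_isNilpotent hN hp h.1
  obtain ⟨w, hwq, hw0, hNw⟩ := exists_ne_zero_mem_ker_of_isNilpotent hN hq h.2
  obtain ⟨c, rfl⟩ := mem_span_singleton.mp (hker hNv)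
  obtain ⟨d, rfl⟩ := mem_span_singleton.mp (hker hNw)
  have hd : d ≠ 0 := by rintro rfl; simp at hw0
  have hvq : c • e ∈ q := by
    simpa [smul_smul, hd] using q.smul_mem (c * d⁻¹) hwq
  exact hv0 (disjoint_def.mp hpq.disjoint _ hvp hvq)


section Prod

variable {R U : Type*} [Ring R] [AddCommGroup U] [Module R U] {p q : Submodule R (U × U)}

theorem map_fst_eq_comap_inr (hpq : IsCompl p q) (hp : ∀ x ∈ p, (0, x.1) ∈ p)
    (hq : ∀ x ∈ q, (0, x.1) ∈ q) : p.map (LinearMap.fst R U U) = p.comap (LinearMap.inr R U U) := by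
  refine le_antisymm (fun u ⟨x, hx, hxu⟩ => hxu ▸ hp x hx) fun u hu => ?_
  obtain ⟨x, hx, y, hy, hxy⟩ := mem_sup.mp (hpq.sup_eq_top ▸ mem_top : ((u, 0) : U × U) ∈ p ⊔ q)
  have hy1 : ((0 : U), y.1) ∈ p := by
    have hu1 : u = x.1 + y.1 := by rw [← Prod.fst_add, hxy]
    have := p.sub_mem hu (hp x hx)
    rwa [LinearMap.inr_apply, Prod.mk_sub_mk, sub_zero, hu1, add_sub_cancel_left] at this
  have hy0 : y.1 = 0 := by
    simpa using disjoint_def.mp hpq.disjoint _ hy1 (hq y hy)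
  refine ⟨x, hx, ?_⟩
  simpa [hy0] using congrArg Prod.fst hxy

theorem isCompl_map_fst (hpq : IsCompl p q) (hp : ∀ x ∈ p, (0, x.1) ∈ p)
    (hq : ∀ x ∈ q, (0, x.1) ∈ q) :
    IsCompl (p.map (LinearMap.fst R U U)) (q.map (LinearMap.fst R U U)) := by
  refine ⟨disjoint_def.mpr fun u hup huq => ?_, codisjoint_iff.mpr ?_⟩
  · rw [map_fst_eq_comap_inr hpq hp hq] at hup
    rw [map_fst_eq_comap_inr hpq.symm hq hp] at huq
    simpa using disjoint_def.mp hpq.disjoint _ hup huq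
  · rw [← map_sup, hpq.sup_eq_top, map_top, LinearMap.range_eq_top]
    exact LinearMap.fst_surjective

theorem eq_bot_of_map_fst_eq_bot (hpq : IsCompl p q) (hp : ∀ x ∈ p, (0, x.1) ∈ p)
    (hq : ∀ x ∈ q, (0, x.1) ∈ q) (h : p.map (LinearMap.fst R U U) = ⊥) : p = ⊥ := by
  have hfst : ∀ x ∈ p, x.1 = 0 := fun x hx => (mem_bot R).mp (h ▸ mem_map_of_mem hx)
  refine eq_bot_iff.mpr fun x hx => ?_
  have hx2 : x.2 ∈ p.comap (LinearMap.inr R U U) := by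
    have : ((0 : U), x.2) = x := Prod.ext (hfst x hx).symm rfl
    simpa [this] using hx
  rw [← map_fst_eq_comap_inr hpq hp hq, h] at hx2
  exact (mem_bot R).mpr (Prod.ext (hfst x hx) ((mem_bot R).mp hx2))

theorem apply_mem_map_fst {T : Module.End R U} (hpq : IsCompl p q)
    (hp : ∀ x ∈ p, (0, x.1) ∈ p ∧ (0, T x.1) ∈ p) (hq : ∀ x ∈ q, (0, x.1) ∈ q) :
    ∀ u ∈ p.map (LinearMap.fst R U U), T u ∈ p.map (LinearMap.fst R U U) := by
  rintro _ ⟨x, hx, rfl⟩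
  rw [map_fst_eq_comap_inr hpq (fun x hx => (hp x hx).1) hq]
  exact (hp x hx).2

theorem eq_bot_or_eq_bot_of_isCompl_prod {T : Module.End R U}
    (hT : ∀ s t : Submodule R U, (∀ u ∈ s, T u ∈ s) → (∀ u ∈ t, T u ∈ t) → IsCompl s t →
      s = ⊥ ∨ t = ⊥)
    (hpq : IsCompl p q) (hp : ∀ x ∈ p, (0, x.1) ∈ p ∧ (0, T x.1) ∈ p)
    (hq : ∀ x ∈ q, (0, x.1) ∈ q ∧ (0, T x.1) ∈ q) : p = ⊥ ∨ q = ⊥ := by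
  have hpa x hx := (hp x hx).1
  have hqa x hx := (hq x hx).1
  rcases hT _ _ (apply_mem_map_fst hpq hp hqa) (apply_mem_map_fst hpq.symm hq hpa)
      (isCompl_map_fst hpq hpa hqa) with h | h
  · exact Or.inl (eq_bot_of_map_fst_eq_bot hpq hpa hqa h)
  · exact Or.inr (eq_bot_of_map_fst_eq_bot hpq.symm hqa hpa h)

end Prod

end Submodule

theorem jordan_eq_smul_one_add_jordan_zero (m : ℕ) (μ : ℂ) : jordan m μ = μ • 1 + jordan m 0 := by
  ext i j
  by_cases h : i = j <;> simp [jordan, h]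

theorem isNilpotent_jordan_zero (m : ℕ) : IsNilpotent (jordan m 0) := by
  have hupper : (jordan m 0).IsUpperTriangular := fun i j hji => by
    have hji : (j : ℕ) < i := hji
    simp [jordan, Fin.ext_iff, show (j : ℕ) ≠ i + 1 by omega]
  have hchar : (jordan m 0).charpoly = Polynomial.X ^ m := by
    rw [charpoly_of_isUpperTriangular _ hupper]
    simp [jordan]
  refine ⟨m, ?_⟩
  simpa [hchar] using aeval_self_charpoly (jordan m 0)

theorem jordan_zero_mulVec_apply {m : ℕ} (v : Fin m → ℂ) {i j : Fin m}
    (hij : (j : ℕ) = (i : ℕ) + 1) : (jordan m 0 *ᵥ v) i = v j := by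
  rw [mulVec, dotProduct, Finset.sum_eq_single j]
  · simp [jordan, hij, Fin.ext_iff]
  · intro k _ hkj
    have : (k : ℕ) ≠ (i : ℕ) + 1 := fun h => hkj (Fin.ext (h.trans hij.symm))
    simp [jordan, this]
  · simp

theorem ker_jordan_zero_le_span {m : ℕ} (hm : 0 < m) :
    LinearMap.ker (toLin' (jordan m 0)) ≤ ℂ ∙ Pi.single ⟨0, hm⟩ 1 := by
  intro v hv
  refine Submodule.mem_span_singleton.mpr ⟨v ⟨0, hm⟩, funext fun j => ?_⟩
  rcases j with ⟨_ | k, hk⟩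
  · simp
  · have := jordan_zero_mulVec_apply v (i := ⟨k, by omega⟩) (j := ⟨k + 1, hk⟩) rfl
    rw [LinearMap.mem_ker, toLin'_apply] at hv
    rw [← this, hv]
    simp

theorem jordan_eq_bot_or_eq_bot_of_isCompl {m : ℕ} (hm : 0 < m) (μ : ℂ)
    (p q : Submodule ℂ (Fin m → ℂ)) (hp : ∀ u ∈ p, toLin' (jordan m μ) u ∈ p)
    (hq : ∀ u ∈ q, toLin' (jordan m μ) u ∈ q) (hpq : IsCompl p q) : p = ⊥ ∨ q = ⊥ := by
  have hshift : ∀ r : Submodule ℂ (Fin m → ℂ), (∀ u ∈ r, toLin' (jordan m μ) u ∈ r) →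
      ∀ u ∈ r, toLin' (jordan m 0) u ∈ r := fun r hr u hu => by
    have : toLin' (jordan m 0) u = toLin' (jordan m μ) u - μ • u := by
      simp [jordan_eq_smul_one_add_jordan_zero m μ]
    rw [this]
    exact r.sub_mem (hr u hu) (r.smul_mem μ hu)
  exact Submodule.eq_bot_or_eq_bot_of_isCompl_of_isNilpotent
    ((isNilpotent_toLin'_iff _).mpr (isNilpotent_jordan_zero m)) (ker_jordan_zero_le_span hm)
    (hshift p hp) (hshift q hq) hpq

/-- Indecomposability of the type II (band) modules of Gelfand–Ponomarev:
for every `m ≥ 1` and `μ ∈ ℂ`, the band modules `B(m,μ)` (with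
`a(u,v) = (0,u)`, `b(u,v) = (0,J_m(μ)u)`) and `B′(m,μ)` (with
`a(u,v) = (0,J_m(μ)u)`, `b(u,v) = (0,u)`) are indecomposable `R`-modules. -/
theorem band_indecomposable (m : ℕ) (hm : 1 ≤ m) (μ : ℂ) :
    RIndecomposable (bandA m) (bandB m μ) ∧ RIndecomposable (bandB m μ) (bandA m) := by
  have hne : ∃ v : (Fin m → ℂ) × (Fin m → ℂ), v ≠ 0 :=
    ⟨(Pi.single ⟨0, hm⟩ 1, 0), fun h => by simpa using congrFun (congrArg Prod.fst h) ⟨0, hm⟩⟩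
  have hJ := jordan_eq_bot_or_eq_bot_of_isCompl hm μ
  exact ⟨⟨hne, fun p q hp hq hpq => Submodule.eq_bot_or_eq_bot_of_isCompl_prod hJ hpq hp hq⟩,
    ⟨hne, fun p q hp hq hpq => Submodule.eq_bot_or_eq_bot_of_isCompl_prod hJ hpq
      (fun x hx => (hp x hx).symm) (fun x hx => (hq x hx).symm)⟩⟩
end

section
/- For m, m′ ≥ 1 and μ, μ′ ∈ ℂ, the band modules B(m,μ) and B(m′,μ′) are isomorphic as R-modules if and only if m = m′ and μ = μ′. (The parameter μ of a type II module is an isomorphism invariant.) -/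
/-!
An isomorphism of band modules must carry the image `0 × ℂ^m` of `a` onto `0 × ℂ^{m'}`;
restricted there it is a linear isomorphism `P : ℂ^m ≃ ℂ^{m'}` with `P J_m(μ) = J_{m'}(μ') P`.
Hence `m = m'`, and comparing traces gives `m μ = m μ'`.
-/

section BandOfEndomorphism

variable {U U' : Type} [AddCommGroup U] [Module ℂ U] [AddCommGroup U'] [Module ℂ U']

/-- The band module of `T` is `U × U` with `a (u, v) = (0, u)` and `b (u, v) = (0, T u)`.
Intertwining `a` forces `e (0, u) = (0, (e (u, 0)).1)`, so `u ↦ (e (u, 0)).1` conjugates `T`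
to `T'`. -/
theorem RModIso.exists_conj_of_band {T : Module.End ℂ U} {T' : Module.End ℂ U'}
    (h : RModIso
      (LinearMap.prod 0 (LinearMap.fst ℂ U U)) (LinearMap.prod 0 (T ∘ₗ LinearMap.fst ℂ U U))
      (LinearMap.prod 0 (LinearMap.fst ℂ U' U'))
      (LinearMap.prod 0 (T' ∘ₗ LinearMap.fst ℂ U' U'))) :
    ∃ P : U ≃ₗ[ℂ] U', P.conj T = T' := by
  obtain ⟨e, ha, hb⟩ := h
  have he_inr : ∀ u v : U, e (0, u) = (0, (e (u, v)).1) := fun u v => by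
    simpa using ha (u, v)
  let P : U →ₗ[ℂ] U' :=
    LinearMap.fst ℂ U' U' ∘ₗ (e : U × U →ₗ[ℂ] U' × U') ∘ₗ LinearMap.inl ℂ U U
  have hP : ∀ u, e (0, u) = (0, P u) := fun u => he_inr u 0
  have hP_inj : Function.Injective P := fun u u' huu' => by
    simpa using congrArg Prod.snd (e.injective (by rw [hP, hP, huu'] : e (0, u) = e (0, u')))
  have hP_surj : Function.Surjective P := fun w => by
    refine ⟨(e.symm (w, 0)).1, ?_⟩
    simpa [hP] using he_inr (e.symm (w, 0)).1 (e.symm (w, 0)).2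
  have hPT : ∀ u, P (T u) = T' (P u) := fun u => by
    have := hb (u, 0)
    simp only [LinearMap.prod_apply, Function.prod_apply, LinearMap.comp_apply, LinearMap.coe_fst,
      LinearMap.zero_apply, hP] at this
    exact congrArg Prod.snd this
  let Pe := LinearEquiv.ofBijective P ⟨hP_inj, hP_surj⟩
  refine ⟨Pe, LinearMap.ext fun x => ?_⟩
  obtain ⟨u, rfl⟩ := Pe.surjective x
  simp only [LinearEquiv.conj_apply, LinearMap.comp_apply, LinearEquiv.coe_coe,
    LinearEquiv.symm_apply_apply]
  exact hPT u

end BandOfEndomorphism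

theorem jordan_trace (m : ℕ) (μ : ℂ) : (jordan m μ).trace = m * μ := by
  simp [Matrix.trace, jordan]

theorem eq_of_conj_toLin'_jordan {m : ℕ} (hm : m ≠ 0) {μ μ' : ℂ}
    (P : (Fin m → ℂ) ≃ₗ[ℂ] (Fin m → ℂ))
    (h : P.conj (jordan m μ).toLin' = (jordan m μ').toLin') : μ = μ' := by
  have htrace := congrArg (LinearMap.trace ℂ _) h
  rw [LinearMap.trace_conj', Matrix.trace_toLin'_eq, Matrix.trace_toLin'_eq,
    jordan_trace, jordan_trace] at htrace
  exact mul_left_cancel₀ (Nat.cast_ne_zero.mpr hm) htrace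

theorem band_iso_iff_general (m m' : ℕ) (hm : 1 ≤ m) (μ μ' : ℂ) :
    RModIso (bandA m) (bandB m μ) (bandA m') (bandB m' μ') ↔ m = m' ∧ μ = μ' := by
  constructor
  · intro h
    obtain ⟨P, hP⟩ :=
      RModIso.exists_conj_of_band (T := (jordan m μ).toLin') (T' := (jordan m' μ').toLin')
        (by simpa only [bandA, bandB] using h)
    obtain rfl : m = m' := by simpa using P.finrank_eq
    exact ⟨rfl, eq_of_conj_toLin'_jordan (Nat.one_le_iff_ne_zero.mp hm) P hP⟩
  · rintro ⟨rfl, rfl⟩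
    exact ⟨LinearEquiv.refl ℂ _, fun _ => rfl, fun _ => rfl⟩

/-- The parameter `μ` (and size `m`) of a type II band module is an isomorphism
invariant: for `m, m′ ≥ 1` and `μ, μ′ ∈ ℂ`, the band modules `B(m,μ)` and
`B(m′,μ′)` are isomorphic as `R`-modules if and only if `m = m′` and `μ = μ′`. -/
theorem band_iso_iff (m m' : ℕ) (hm : 1 ≤ m) (hm' : 1 ≤ m') (μ μ' : ℂ) :
    RModIso (bandA m) (bandB m μ) (bandA m') (bandB m' μ') ↔ m = m' ∧ μ = μ' :=
  band_iso_iff_general m m' hm μ μ'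
end
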